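/- Let p be a function analytic on the open unit disk 𝔻 = {z ∈ ℂ : |z| < 1} with p(0) = 1. If |z·p'(z) + p(z) − p(z)²| < 1/2 for all z ∈ 𝔻, then Re p(z) > 0 for all z ∈ 𝔻. -/

import Mathlib

/-!
Suppose `Re p` is not positive on the disk and let `z₀` be a point of least modulus with
`Re p(z₀) ≤ 0`. Then `Re p ≥ 0` on `|z| ≤ |z₀|` and `p(z₀) = it` with `t` real. The Cayley transform
`w = (1 - p)/(1 + p)` maps this closed disk into the closed unit disk, with `w(0) = 0` and
`|w(z₀)| = 1`, so Jack's lemma gives `z₀ w'(z₀) = m w(z₀)` with `m ≥ 1`, i.e.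
`z₀ p'(z₀) = -m(1 + t²)/2`. Hence `z₀ p'(z₀) + p(z₀) - p(z₀)² = t² - m(1 + t²)/2 + it`, whose
modulus is at least `1/2`.
-/

open Complex Metric Set Filter Topology ComplexConjugate

theorem HasDerivAt.nonneg_of_isLocalMaxOn_Iic {f : ℝ → ℝ} {f' a : ℝ} (hf : HasDerivAt f f' a)
    (h : IsLocalMaxOn f (Iic a) a) : 0 ≤ f' := by
  have hy : (-1 : ℝ) ∈ posTangentConeAt (Iic a) a :=
    mem_posTangentConeAt_of_segment_subset (by
      rw [segment_symm, segment_eq_Icc (by linarith)]; exact Icc_subset_Iic_self)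
  simpa using h.hasFDerivWithinAt_nonpos hf.hasFDerivAt.hasFDerivWithinAt hy

theorem nonneg_on_closedBall_of_pos_on_ball {E : Type*} [NormedAddCommGroup E] [NormedSpace ℝ E]
    {f : E → ℝ} {x : E} {r : ℝ} (hr : r ≠ 0) (hf : ContinuousOn f (closedBall x r))
    (hpos : ∀ z ∈ ball x r, 0 < f z) : ∀ z ∈ closedBall x r, 0 ≤ f z := by
  rw [← closure_ball x hr] at hf ⊢
  intro z hz
  have : f z ∈ closure (Ioi 0) :=
    closure_mono (image_subset_iff.2 hpos) (hf.image_closure (mem_image_of_mem f hz))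
  simpa using this

theorem exists_min_norm_nonpos {E : Type*} [NormedAddCommGroup E] [ProperSpace E]
    {f : E → ℝ} {z₁ : E} {R : ℝ} (hf : ContinuousOn f (closedBall 0 R))
    (hz₁ : z₁ ∈ closedBall 0 R) (hfz₁ : f z₁ ≤ 0) :
    ∃ z₀ ∈ closedBall 0 R, f z₀ ≤ 0 ∧ ∀ z ∈ ball 0 ‖z₀‖, 0 < f z := by
  set K := closedBall 0 R ∩ f ⁻¹' Iic 0
  have hK : IsCompact K := (isCompact_closedBall 0 R).of_isClosed_subset
    (hf.preimage_isClosed_of_isClosed isClosed_closedBall isClosed_Iic) inter_subset_left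
  obtain ⟨z₀, ⟨hz₀R, hfz₀⟩, hmin⟩ := hK.exists_isMinOn ⟨z₁, hz₁, hfz₁⟩ continuous_norm.continuousOn
  refine ⟨z₀, hz₀R, hfz₀, fun z hz => ?_⟩
  rw [mem_ball_zero_iff] at hz
  by_contra! hfz
  have hzR : z ∈ closedBall 0 R := by
    rw [mem_closedBall_zero_iff] at hz₀R ⊢; linarith
  exact (hmin ⟨hzR, hfz⟩).not_gt hz

theorem norm_one_sub_le_norm_one_add_iff (z : ℂ) : ‖1 - z‖ ≤ ‖1 + z‖ ↔ 0 ≤ z.re := by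
  rw [← sq_le_sq₀ (norm_nonneg _) (norm_nonneg _), Complex.sq_norm, Complex.sq_norm]
  simp only [normSq_apply, sub_re, add_re, one_re, sub_im, add_im, one_im]
  constructor <;> intro h <;> nlinarith

theorem norm_one_sub_eq_norm_one_add_iff (z : ℂ) : ‖1 - z‖ = ‖1 + z‖ ↔ z.re = 0 := by
  rw [← sq_eq_sq₀ (norm_nonneg _) (norm_nonneg _), Complex.sq_norm, Complex.sq_norm]
  simp only [normSq_apply, sub_re, add_re, one_re, sub_im, add_im, one_im]
  constructor <;> intro h <;> nlinarith

/- Along the circle `|z| = |z₀|` the function `|w|²` is maximal at `z₀`, and along the ray `s z₀`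
it is at most `s²` with equality at `s = 1`: the first makes `z₀ w'(z₀) / w(z₀)` real, the second
makes it at least `1`. -/
theorem jack_lemma {w : ℂ → ℂ} {w' z₀ : ℂ} (hz₀ : z₀ ≠ 0) (hw : HasDerivAt w w' z₀)
    (hball : ∀ z ∈ ball (0 : ℂ) ‖z₀‖, ‖w z‖ ≤ ‖z‖ / ‖z₀‖)
    (hsphere : ∀ z ∈ sphere (0 : ℂ) ‖z₀‖, ‖w z‖ ≤ 1) (hwz₀ : ‖w z₀‖ = 1) :
    ∃ m : ℝ, 1 ≤ m ∧ z₀ * w' = m * w z₀ := by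
  set ζ := z₀ * w' * conj (w z₀)
  have hcurve {γ : ℝ → ℂ} {γ' : ℂ} {s : ℝ} (hγ : HasDerivAt γ γ' s) (hs : γ s = z₀) :
      HasDerivAt (fun s => ‖w (γ s)‖ ^ 2) (2 * (γ' * w' * conj (w z₀)).re) s := by
    have := (hs ▸ hw).comp s hγ |>.norm_sq
    rwa [Function.comp_apply, hs, Complex.inner, mul_comm w'] at this
  have him : ζ.im = 0 := by
    have hrot : HasDerivAt (fun θ : ℝ => exp (θ * I) * z₀) (I * z₀) 0 := by
      simpa using ((hasDerivAt_id (0 : ℝ)).ofReal_comp.mul_const I).cexp.mul_const z₀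
    have hmax : IsLocalMax (fun θ : ℝ => ‖w (exp (θ * I) * z₀)‖ ^ 2) 0 := by
      refine Filter.Eventually.of_forall fun θ => ?_
      have : exp (θ * I) * z₀ ∈ sphere (0 : ℂ) ‖z₀‖ := by
        simp [norm_exp_ofReal_mul_I]
      simpa [hwz₀] using pow_le_pow_left₀ (norm_nonneg _) (hsphere _ this) 2
    have := hmax.hasDerivAt_eq_zero (hcurve hrot (by simp))
    rw [show I * z₀ * w' * conj (w z₀) = I * ζ by ring] at this
    simpa using this
  have hre : 1 ≤ ζ.re := by
    have hray : HasDerivAt (fun s : ℝ => (s : ℂ) * z₀) z₀ 1 := by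
      simpa using (hasDerivAt_id (1 : ℝ)).ofReal_comp.mul_const z₀
    have hmax : IsLocalMaxOn (fun s : ℝ => ‖w (s * z₀)‖ ^ 2 - s ^ 2) (Iic 1) 1 := by
      filter_upwards [Ioc_mem_nhdsLE (show (-1 : ℝ) < 1 by norm_num)] with s ⟨hs₁, hs₂⟩
      rcases hs₂.eq_or_lt with rfl | hs₂
      · rfl
      have hsz : (s : ℂ) * z₀ ∈ ball (0 : ℂ) ‖z₀‖ := by
        rw [mem_ball_zero_iff, norm_mul, norm_real, Real.norm_eq_abs]
        exact mul_lt_of_lt_one_left (norm_pos_iff.2 hz₀) (abs_lt.2 ⟨hs₁, hs₂⟩)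
      have hws : ‖w (s * z₀)‖ ≤ |s| := by
        simpa [norm_mul, hz₀] using hball _ hsz
      simp only [ofReal_one, one_mul, hwz₀, one_pow, sub_self, sub_nonpos, ← sq_abs s]
      exact pow_le_pow_left₀ (norm_nonneg _) hws 2
    have := ((hcurve hray (by simp)).sub (hasDerivAt_pow 2 1)).nonneg_of_isLocalMaxOn_Iic hmax
    rw [one_pow, mul_one, Nat.cast_ofNat] at this
    linarith
  refine ⟨ζ.re, hre, ?_⟩
  have hζ : (ζ.re : ℂ) = ζ := Complex.ext rfl (by simp [him])
  have hw_unit : conj (w z₀) * w z₀ = 1 := by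
    rw [mul_comm, mul_conj, normSq_eq_norm_sq, hwz₀, one_pow, ofReal_one]
  rw [hζ]
  linear_combination (-(z₀ * w')) * hw_unit

theorem exists_mul_deriv_eq_of_eq_mul_I {p : ℂ → ℂ} {z₀ : ℂ} {t : ℝ} (hz₀ : z₀ ≠ 0)
    (hp : ∀ z ∈ closedBall (0 : ℂ) ‖z₀‖, DifferentiableAt ℂ p z) (hp0 : p 0 = 1)
    (hnonneg : ∀ z ∈ closedBall (0 : ℂ) ‖z₀‖, 0 ≤ (p z).re) (hpz₀ : p z₀ = t * I) :
    ∃ m : ℝ, 1 ≤ m ∧ z₀ * deriv p z₀ = -(m * (1 + t ^ 2) / 2) := by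
  have hz₀mem : z₀ ∈ closedBall (0 : ℂ) ‖z₀‖ := by simp
  have hne : ∀ z ∈ closedBall (0 : ℂ) ‖z₀‖, 1 + p z ≠ 0 := fun z hz h => by
    have := congrArg re h
    simp only [add_re, one_re, zero_re] at this
    linarith [hnonneg z hz]
  set w : ℂ → ℂ := fun z => (1 - p z) / (1 + p z)
  have hw_le : ∀ z ∈ closedBall (0 : ℂ) ‖z₀‖, ‖w z‖ ≤ 1 := fun z hz => by
    rw [norm_div]
    exact div_le_one_of_le₀ ((norm_one_sub_le_norm_one_add_iff _).2 (hnonneg z hz)) (norm_nonneg _)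
  have hwz₀ : ‖w z₀‖ = 1 := by
    rw [norm_div, (norm_one_sub_eq_norm_one_add_iff _).2 (by simp [hpz₀]),
      div_self (norm_ne_zero_iff.2 (hne z₀ hz₀mem))]
  have hdiff : DifferentiableOn ℂ w (ball 0 ‖z₀‖) := fun z hz => by
    have hpz := hp z (ball_subset_closedBall hz)
    exact ((hpz.const_sub 1).div (hpz.const_add 1)
      (hne z (ball_subset_closedBall hz))).differentiableWithinAt
  have hschwarz : ∀ z ∈ ball (0 : ℂ) ‖z₀‖, ‖w z‖ ≤ ‖z‖ / ‖z₀‖ := fun z hz => by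
    have hw0 : w 0 = 0 := by simp [w, hp0]
    have hmaps : MapsTo w (ball 0 ‖z₀‖) (closedBall (w 0) 1) := fun z hz => by
      simpa [hw0] using hw_le z (ball_subset_closedBall hz)
    simpa [hw0, div_eq_inv_mul] using Complex.dist_le_div_mul_dist_of_mapsTo_ball hdiff hmaps hz
  have hderiv := ((hp z₀ hz₀mem).hasDerivAt.const_sub 1).div
    ((hp z₀ hz₀mem).hasDerivAt.const_add 1) (hne z₀ hz₀mem)
  obtain ⟨m, hm, hmz⟩ := jack_lemma hz₀ hderiv hschwarz
    (fun z hz => hw_le z (sphere_subset_closedBall hz)) hwz₀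
  refine ⟨m, hm, ?_⟩
  have h1p := hne z₀ hz₀mem
  rw [Pi.div_apply] at hmz
  field_simp at hmz
  rw [hpz₀] at hmz
  linear_combination (-1 / 2 : ℂ) * hmz + (m * t ^ 2 / 2 : ℂ) * I_sq

theorem one_half_le_norm_add_mul_I_sub_sq {t m : ℝ} (hm : 1 ≤ m) :
    1 / 2 ≤ ‖-(m * (1 + t ^ 2) / 2 : ℂ) + t * I - (t * I) ^ 2‖ := by
  have hform : -(m * (1 + t ^ 2) / 2 : ℂ) + t * I - (t * I) ^ 2
      = (t ^ 2 - m * (1 + t ^ 2) / 2 : ℝ) + t * I := by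
    push_cast
    linear_combination (-t ^ 2 : ℂ) * I_sq
  rw [← sq_le_sq₀ (by norm_num) (norm_nonneg _), hform, Complex.sq_norm, normSq_add_mul_I]
  nlinarith [mul_nonneg (sub_nonneg.2 hm) (add_nonneg zero_le_one (sq_nonneg t)), sq_nonneg t,
    sq_nonneg (t ^ 2 - m * (1 + t ^ 2) / 2 + (1 - t ^ 2) / 2)]

theorem stmt_5 (p : ℂ → ℂ)
    (hp : AnalyticOnNhd ℂ p (ball (0 : ℂ) 1))
    (hp0 : p 0 = 1)
    (hineq : ∀ z ∈ ball (0 : ℂ) 1,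
      ‖z * deriv p z + p z - (p z) ^ 2‖ < 1 / 2) :
    ∀ z ∈ ball (0 : ℂ) 1, 0 < (p z).re := by
  by_contra! ⟨z₁, hz₁, hre₁⟩
  have hcont : ContinuousOn (fun z => (p z).re) (closedBall 0 ‖z₁‖) :=
    (continuous_re.comp_continuousOn hp.continuousOn).mono
      (closedBall_subset_ball (mem_ball_zero_iff.1 hz₁))
  obtain ⟨z₀, hz₀, hre₀, hpos⟩ := exists_min_norm_nonpos hcont (by simp) hre₁
  have hz₀ne : z₀ ≠ 0 := by
    rintro rfl
    norm_num [hp0] at hre₀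
  have hsub : closedBall (0 : ℂ) ‖z₀‖ ⊆ ball 0 1 :=
    (closedBall_subset_closedBall (mem_closedBall_zero_iff.1 hz₀)).trans
      (closedBall_subset_ball (mem_ball_zero_iff.1 hz₁))
  have hnonneg := nonneg_on_closedBall_of_pos_on_ball (norm_ne_zero_iff.2 hz₀ne)
    (hcont.mono (closedBall_subset_closedBall (mem_closedBall_zero_iff.1 hz₀))) hpos
  obtain ⟨t, ht⟩ : ∃ t : ℝ, p z₀ = t * I :=
    ⟨(p z₀).im, Complex.ext (by simpa using le_antisymm hre₀ (hnonneg z₀ (by simp))) (by simp)⟩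
  obtain ⟨m, hm, hderiv⟩ := exists_mul_deriv_eq_of_eq_mul_I hz₀ne
    (fun z hz => (hp z (hsub hz)).differentiableAt) hp0 hnonneg ht
  have hlt := hineq z₀ (hsub (by simp))
  rw [hderiv, ht] at hlt
  exact hlt.not_ge (one_half_le_norm_add_mul_I_sub_sq hm)
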